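/- Let Y be a finite nonempty set, let (Ω, F, P) be a probability space, let (Y_n)_{n≥1} be a sequence of Y-valued random variables, and let F_n = σ(Y_1, …, Y_n) be the generated filtration (F_0 trivial). For each n and y ∈ Y let p_n(y) = P(Y_n = y | F_{n−1}) denote the conditional probability (a [0,1]-valued F_{n−1}-measurable random variable). Assume there is a constant c > 0 such that almost surely p_n(Y_n) ≥ c for all n. Define the log-perplexity l_N = −(1/N) Σ_{n=1}^N log₂ p_n(Y_n) and the empirical entropy h_N = (1/N) Σ_{n=1}^N H(p_n), where H(p_n) = −Σ_{y∈Y} p_n(y) log₂ p_n(y) (with the convention 0·log₂0 = 0). Then for every ε > 0, lim_{N→∞} P(|l_N − h_N| > ε) = 0. -/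

import Mathlib

/-!
With `D_n = -log₂ p_n(Y_n) - H(p_n)` one has `l_N - h_N = (1/N) ∑_{n ≤ N} D_n`. Since `H(p_n)` is
the `F_{n-1}`-conditional expectation of the surprisal `-log₂ p_n(Y_n)`, the `D_n` are martingale
differences, and `p_n(Y_n) ≥ c` bounds them by `B = |log₂ c| + |Y| / log 2`. Martingale
differences are orthogonal in `L²`, so `E[(∑_{n ≤ N} D_n)²] ≤ N B²`, and Chebyshev's inequality
gives `P(|l_N - h_N| > ε) ≤ B² / (N ε²) → 0`.
-/

open MeasureTheory Filter Finset
open scoped Classical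

namespace Real

lemma abs_mul_logb_le {b x : ℝ} (hb : 1 < b) (hx₀ : 0 ≤ x) (hx₁ : x ≤ 1) :
    |x * logb b x| ≤ 1 / log b := by
  rcases hx₀.eq_or_lt with rfl | hx₀
  · simp [(log_pos hb).le]
  rw [logb, ← mul_div_assoc, abs_div, abs_of_pos (log_pos hb), mul_comm]
  exact div_le_div_of_nonneg_right (abs_log_mul_self_lt x hx₀ hx₁).le (log_pos hb).le

lemma abs_logb_le_abs_logb_of_le {b c x : ℝ} (hb : 1 < b) (hc : 0 < c) (hcx : c ≤ x)
    (hx : x ≤ 1) : |logb b x| ≤ |logb b c| :=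
  abs_le_abs_of_nonpos (logb_nonpos hb (hc.le.trans hcx) hx)
    (logb_le_logb_of_le hb hc hcx)

@[fun_prop]
lemma measurable_logb (b : ℝ) : Measurable (logb b) :=
  measurable_log.div_const _

end Real

-- `Real.logb 2 0 = 0` gives the convention `0 * log₂ 0 = 0`.
noncomputable def shannonEntropy {Y : Type*} [Fintype Y] (q : Y → ℝ) : ℝ :=
  -∑ y, q y * Real.logb 2 (q y)

lemma abs_shannonEntropy_le {Y : Type*} [Fintype Y] {q : Y → ℝ} (hq : ∀ y, q y ∈ Set.Icc 0 1) :
    |shannonEntropy q| ≤ Fintype.card Y / Real.log 2 := by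
  rw [shannonEntropy, abs_neg, div_eq_mul_one_div, ← nsmul_eq_mul, ← Finset.card_univ]
  exact (abs_sum_le_sum_abs _ _).trans <| sum_le_card_nsmul _ _ _ fun y _ ↦
    Real.abs_mul_logb_le one_lt_two (hq y).1 (hq y).2

section ConditionalProbability

variable {Y Ω : Type*} {m m0 : MeasurableSpace Ω} {μ : Measure Ω}

lemma ae_condExp_mem_Icc {f : Ω → ℝ} {b : ℝ} (hb : 0 ≤ b) (hf : ∀ᵐ ω ∂μ, f ω ∈ Set.Icc 0 b) :
    ∀ᵐ ω ∂μ, μ[f | m] ω ∈ Set.Icc 0 b := by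
  filter_upwards [condExp_nonneg (m := m) (hf.mono fun _ h ↦ h.1),
    condExp_le_nonneg_const (m := m) hb (hf.mono fun _ h ↦ h.2)] with ω h₀ h₁
  exact ⟨h₀, h₁⟩

lemma measurable_apply_of_measurableSet_eq [Countable Y] {β : Type*} [MeasurableSpace β]
    {Z : Ω → Y} (hZ : ∀ y, MeasurableSet[m] {ω | Z ω = y}) {g : Y → Ω → β}
    (hg : ∀ y, Measurable[m] (g y)) :
    Measurable[m] fun ω ↦ g (Z ω) ω := by
  let _ : MeasurableSpace Y := ⊤
  have hZ' : Measurable[m] Z := measurable_to_countable' fun y ↦ hZ y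
  exact (measurable_from_prod_countable_left (f := fun x : Ω × Y ↦ g x.2 x.1) hg).comp
    (measurable_id.prodMk hZ')

lemma integrable_ite_eq [IsFiniteMeasure μ] {Z : Ω → Y} (hZ : ∀ y, MeasurableSet {ω | Z ω = y})
    (y : Y) : Integrable (fun ω ↦ if Z ω = y then (1 : ℝ) else 0) μ :=
  .of_bound (measurable_const.ite (hZ y) measurable_const).aestronglyMeasurable 1
    (ae_of_all _ fun ω ↦ by split_ifs <;> simp)

lemma condExp_apply_eq_sum_mul_condExp [Fintype Y] [IsFiniteMeasure μ] {Z : Ω → Y}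
    (hZ : ∀ y, MeasurableSet {ω | Z ω = y}) {g : Y → Ω → ℝ}
    (hg : ∀ y, StronglyMeasurable[m] (g y))
    (hgZ : ∀ y, Integrable (fun ω ↦ g y ω * if Z ω = y then 1 else 0) μ) :
    μ[fun ω ↦ g (Z ω) ω | m] =ᵐ[μ]
      fun ω ↦ ∑ y, g y ω * μ[fun ω' ↦ if Z ω' = y then (1 : ℝ) else 0 | m] ω := by
  have hsum : (fun ω ↦ g (Z ω) ω) = ∑ y, fun ω ↦ g y ω * if Z ω = y then 1 else 0 := by
    ext ω
    simp [Finset.sum_apply]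
  rw [hsum]
  filter_upwards [condExp_finsetSum (fun y _ ↦ hgZ y) m, ae_all_iff.2 fun y ↦
    condExp_mul_of_stronglyMeasurable_left (m := m) (hg y) (hgZ y) (integrable_ite_eq hZ y)]
    with ω h₁ h₂
  rw [h₁, Finset.sum_apply]
  exact Finset.sum_congr rfl fun y _ ↦ h₂ y

lemma ae_mem_Icc_of_eq_condExp [Countable Y] {Z : Ω → Y} {q : Y → Ω → ℝ}
    (hq : ∀ y, q y = μ[fun ω ↦ if Z ω = y then (1 : ℝ) else 0 | m]) :
    ∀ᵐ ω ∂μ, ∀ y, q y ω ∈ Set.Icc 0 1 :=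
  ae_all_iff.2 fun y ↦ hq y ▸ ae_condExp_mem_Icc zero_le_one
    (ae_of_all _ fun ω ↦ by split_ifs <;> simp)

end ConditionalProbability

section ExcessSurprisal

variable {Y Ω : Type*} [Fintype Y] {m m0 : MeasurableSpace Ω} {μ : Measure Ω}
  {Z : Ω → Y} {q : Y → Ω → ℝ} {c : ℝ}

noncomputable def excessSurprisal (Z : Ω → Y) (q : Y → Ω → ℝ) (ω : Ω) : ℝ :=
  -Real.logb 2 (q (Z ω) ω) - shannonEntropy fun y ↦ q y ω

lemma measurable_shannonEntropy {q : Y → Ω → ℝ} (hq : ∀ y, Measurable[m] (q y)) :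
    Measurable[m] fun ω ↦ shannonEntropy fun y ↦ q y ω := by
  unfold shannonEntropy
  fun_prop

lemma stronglyMeasurable_excessSurprisal (hZ : ∀ y, MeasurableSet[m] {ω | Z ω = y})
    (hq : ∀ y, Measurable[m] (q y)) : StronglyMeasurable[m] (excessSurprisal Z q) :=
  (((Real.measurable_logb 2).comp (measurable_apply_of_measurableSet_eq hZ hq)).neg.sub
    (measurable_shannonEntropy hq)).stronglyMeasurable

lemma ae_abs_excessSurprisal_le (hq : ∀ᵐ ω ∂μ, ∀ y, q y ω ∈ Set.Icc 0 1) (hc : 0 < c)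
    (hcq : ∀ᵐ ω ∂μ, c ≤ q (Z ω) ω) :
    ∀ᵐ ω ∂μ, |excessSurprisal Z q ω| ≤ |Real.logb 2 c| + Fintype.card Y / Real.log 2 := by
  filter_upwards [hq, hcq] with ω hq hcq
  refine (abs_sub _ _).trans (add_le_add ?_ (abs_shannonEntropy_le hq))
  rw [abs_neg]
  exact Real.abs_logb_le_abs_logb_of_le one_lt_two hc hcq (hq _).2

lemma condExp_excessSurprisal_eq_zero [IsFiniteMeasure μ] (hm : m ≤ m0)
    (hZ : ∀ y, MeasurableSet {ω | Z ω = y})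
    (hq : ∀ y, q y = μ[fun ω ↦ if Z ω = y then (1 : ℝ) else 0 | m]) (hc : 0 < c)
    (hcq : ∀ᵐ ω ∂μ, c ≤ q (Z ω) ω) :
    μ[excessSurprisal Z q | m] =ᵐ[μ] 0 := by
  have hq01 := ae_mem_Icc_of_eq_condExp hq
  have hqm : ∀ y, StronglyMeasurable[m] (q y) := fun y ↦ by
    rw [hq y]
    exact stronglyMeasurable_condExp
  have hqm₀ : ∀ y, Measurable (q y) := fun y ↦ (hqm y).measurable.mono hm le_rfl
  have hlogb_le : ∀ᵐ ω ∂μ, ∀ y, Z ω = y → |-Real.logb 2 (q y ω)| ≤ |Real.logb 2 c| := by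
    filter_upwards [hq01, hcq] with ω hq01 hcq y rfl
    rw [abs_neg]
    exact Real.abs_logb_le_abs_logb_of_le one_lt_two hc hcq (hq01 _).2
  have hsurprisal : Integrable (fun ω ↦ -Real.logb 2 (q (Z ω) ω)) μ :=
    .of_bound ((Real.measurable_logb 2).comp
      (measurable_apply_of_measurableSet_eq hZ hqm₀)).neg.aestronglyMeasurable _
      (hlogb_le.mono fun ω h ↦ h _ rfl)
  have hsurprisal_eq : ∀ y, Integrable
      (fun ω ↦ -Real.logb 2 (q y ω) * if Z ω = y then 1 else 0) μ := fun y ↦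
    .of_bound (((Real.measurable_logb 2).comp (hqm₀ y)).neg.mul
      (measurable_const.ite (hZ y) measurable_const)).aestronglyMeasurable |Real.logb 2 c|
      (hlogb_le.mono fun ω h ↦ by
        split_ifs with hy
        · simpa using h y hy
        · simp)
  have hHm : StronglyMeasurable[m] fun ω ↦ shannonEntropy fun y ↦ q y ω :=
    (measurable_shannonEntropy fun y ↦ (hqm y).measurable).stronglyMeasurable
  have hH : Integrable (fun ω ↦ shannonEntropy fun y ↦ q y ω) μ :=
    .of_bound (hHm.mono hm).aestronglyMeasurable _
      (hq01.mono fun ω h ↦ (Real.norm_eq_abs _).trans_le (abs_shannonEntropy_le h))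
  -- the entropy is the conditional expectation of the surprisal
  calc μ[excessSurprisal Z q | m]
      =ᵐ[μ] μ[fun ω ↦ -Real.logb 2 (q (Z ω) ω) | m]
        - μ[fun ω ↦ shannonEntropy fun y ↦ q y ω | m] := condExp_sub hsurprisal hH m
    _ =ᵐ[μ] (fun ω ↦ ∑ y, -Real.logb 2 (q y ω) * q y ω)
        - fun ω ↦ shannonEntropy fun y ↦ q y ω := by
      refine EventuallyEq.sub ?_ (condExp_of_stronglyMeasurable hm hHm hH).eventuallyEq
      refine (condExp_apply_eq_sum_mul_condExp (g := fun y ω ↦ -Real.logb 2 (q y ω)) hZ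
        (fun y ↦ ((Real.measurable_logb 2).comp (hqm y).measurable).neg.stronglyMeasurable)
        hsurprisal_eq).trans (ae_of_all _ fun ω ↦ ?_)
      simp only [← hq]
    _ = 0 := by
      ext ω
      simp [shannonEntropy, mul_comm]

end ExcessSurprisal

section MartingaleDifference

variable {Ω : Type*} {m0 : MeasurableSpace Ω} {μ : Measure Ω}

lemma integral_mul_eq_zero_of_condExp_eq_zero [IsFiniteMeasure μ] {m : MeasurableSpace Ω}
    (hm : m ≤ m0) {X Z : Ω → ℝ} (hX : StronglyMeasurable[m] X) (hXZ : Integrable (X * Z) μ)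
    (hZ : Integrable Z μ) (hZm : μ[Z | m] =ᵐ[μ] 0) :
    ∫ ω, X ω * Z ω ∂μ = 0 := by
  rw [← integral_condExp hm]
  refine integral_eq_zero_of_ae ((condExp_mul_of_stronglyMeasurable_left hX hXZ hZ).trans ?_)
  filter_upwards [hZm] with ω h
  simp [h]

lemma measureReal_lt_abs_le_integral_sq_div [IsFiniteMeasure μ] {X : Ω → ℝ}
    (hX : Integrable (fun ω ↦ X ω ^ 2) μ) {ε : ℝ} (hε : 0 < ε) :
    μ.real {ω | ε < |X ω|} ≤ (∫ ω, X ω ^ 2 ∂μ) / ε ^ 2 := by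
  rw [le_div_iff₀ (by positivity), mul_comm]
  calc ε ^ 2 * μ.real {ω | ε < |X ω|} ≤ ε ^ 2 * μ.real {ω | ε ^ 2 ≤ X ω ^ 2} := by
        gcongr with ω
        · finiteness
        · exact fun h ↦ (sq_abs (X ω)).symm ▸ pow_le_pow_left₀ hε.le h.le 2
    _ ≤ ∫ ω, X ω ^ 2 ∂μ :=
        mul_meas_ge_le_integral_of_nonneg (ae_of_all _ fun ω ↦ sq_nonneg _) hX _

variable [IsProbabilityMeasure μ] {ℱ : Filtration ℕ m0} {D : ℕ → Ω → ℝ} {B : ℝ}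

lemma memLp_of_ae_abs_le (hD : ∀ n, 1 ≤ n → StronglyMeasurable[ℱ n] (D n))
    (hDB : ∀ n, 1 ≤ n → ∀ᵐ ω ∂μ, |D n ω| ≤ B) {n : ℕ} (hn : 1 ≤ n) (p : ENNReal) :
    MemLp (D n) p μ :=
  .of_bound ((hD n hn).mono (ℱ.le n)).aestronglyMeasurable B (hDB n hn)

lemma integral_mul_eq_zero_of_ne (hD : ∀ n, 1 ≤ n → StronglyMeasurable[ℱ n] (D n))
    (hDB : ∀ n, 1 ≤ n → ∀ᵐ ω ∂μ, |D n ω| ≤ B) (hD0 : ∀ n, 1 ≤ n → μ[D n | ℱ (n - 1)] =ᵐ[μ] 0)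
    {n k : ℕ} (hn : 1 ≤ n) (hk : 1 ≤ k) (hnk : n ≠ k) :
    ∫ ω, D n ω * D k ω ∂μ = 0 := by
  wlog h : n < k generalizing n k
  · simpa only [mul_comm] using this hk hn hnk.symm (by omega)
  exact integral_mul_eq_zero_of_condExp_eq_zero (ℱ.le _)
    ((hD n hn).mono (ℱ.mono (by omega))) ((memLp_of_ae_abs_le hD hDB hn 2).integrable_mul
      (memLp_of_ae_abs_le hD hDB hk 2)) ((memLp_of_ae_abs_le hD hDB hk 1).integrable le_rfl)
    (hD0 k hk)

lemma integral_sq_sum_le (hD : ∀ n, 1 ≤ n → StronglyMeasurable[ℱ n] (D n))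
    (hDB : ∀ n, 1 ≤ n → ∀ᵐ ω ∂μ, |D n ω| ≤ B) (hD0 : ∀ n, 1 ≤ n → μ[D n | ℱ (n - 1)] =ᵐ[μ] 0)
    (N : ℕ) : ∫ ω, (∑ n ∈ Icc 1 N, D n ω) ^ 2 ∂μ ≤ N * B ^ 2 := by
  have hint : ∀ n ∈ Icc 1 N, ∀ k ∈ Icc 1 N, Integrable (fun ω ↦ D n ω * D k ω) μ :=
    fun n hn k hk ↦ (memLp_of_ae_abs_le hD hDB (mem_Icc.1 hn).1 2).integrable_mul
      (memLp_of_ae_abs_le hD hDB (mem_Icc.1 hk).1 2)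
  have hsq (ω : Ω) :
      (∑ n ∈ Icc 1 N, D n ω) ^ 2 = ∑ n ∈ Icc 1 N, ∑ k ∈ Icc 1 N, D n ω * D k ω := by
    rw [sq, sum_mul_sum]
  simp_rw [hsq]
  rw [integral_finsetSum _ fun n hn ↦ integrable_finsetSum _ (hint n hn)]
  calc ∑ n ∈ Icc 1 N, ∫ ω, ∑ k ∈ Icc 1 N, D n ω * D k ω ∂μ
      = ∑ n ∈ Icc 1 N, ∫ ω, D n ω * D n ω ∂μ := by
        refine sum_congr rfl fun n hn ↦ ?_
        rw [integral_finsetSum _ (hint n hn)]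
        exact sum_eq_single_of_mem n hn fun k hk hkn ↦
          integral_mul_eq_zero_of_ne hD hDB hD0 (mem_Icc.1 hn).1 (mem_Icc.1 hk).1 hkn.symm
    _ ≤ ∑ n ∈ Icc 1 N, B ^ 2 := by
        refine sum_le_sum fun n hn ↦ ?_
        refine (integral_mono_ae (hint n hn n hn) (integrable_const (B ^ 2)) ?_).trans_eq
          (by simp)
        filter_upwards [hDB n (mem_Icc.1 hn).1] with ω h
        rw [← sq, ← sq_abs]
        exact pow_le_pow_left₀ (abs_nonneg _) h 2
    _ = N * B ^ 2 := by simp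

theorem tendsto_measure_lt_abs_average (hD : ∀ n, 1 ≤ n → StronglyMeasurable[ℱ n] (D n))
    (hDB : ∀ n, 1 ≤ n → ∀ᵐ ω ∂μ, |D n ω| ≤ B) (hD0 : ∀ n, 1 ≤ n → μ[D n | ℱ (n - 1)] =ᵐ[μ] 0)
    {ε : ℝ} (hε : 0 < ε) :
    Tendsto (fun N : ℕ ↦ μ {ω | ε < |1 / (N : ℝ) * ∑ n ∈ Icc 1 N, D n ω|}) atTop (nhds 0) := by
  have hbound (N : ℕ) :
      μ.real {ω | ε < |1 / (N : ℝ) * ∑ n ∈ Icc 1 N, D n ω|} ≤ B ^ 2 / ε ^ 2 / N := by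
    have hS : MemLp (fun ω ↦ 1 / (N : ℝ) * ∑ n ∈ Icc 1 N, D n ω) 2 μ := by
      simpa only [Finset.sum_apply] using (memLp_finsetSum' (Icc 1 N) fun n hn ↦
        memLp_of_ae_abs_le hD hDB (mem_Icc.1 hn).1 2).const_mul (1 / (N : ℝ))
    refine (measureReal_lt_abs_le_integral_sq_div hS.integrable_sq hε).trans ?_
    simp_rw [mul_pow]
    rw [integral_const_mul]
    rcases N.eq_zero_or_pos with rfl | hN
    · simp
    calc (1 / (N : ℝ)) ^ 2 * (∫ ω, (∑ n ∈ Icc 1 N, D n ω) ^ 2 ∂μ) / ε ^ 2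
        ≤ (1 / (N : ℝ)) ^ 2 * (N * B ^ 2) / ε ^ 2 := by
          gcongr
          exact integral_sq_sum_le hD hDB hD0 N
      _ = B ^ 2 / ε ^ 2 / N := by
          field_simp
  rw [← ENNReal.tendsto_toReal_iff (fun _ ↦ measure_ne_top _ _) ENNReal.zero_ne_top]
  exact tendsto_of_tendsto_of_tendsto_of_le_of_le tendsto_const_nhds
    (by simpa using tendsto_const_div_atTop_nhds_zero_nat (B ^ 2 / ε ^ 2))
    (fun N ↦ ENNReal.toReal_nonneg) hbound

end MartingaleDifference

theorem unequipartition_property_perplexity_general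
    {Y : Type*} [Fintype Y]
    {Ω : Type*} {m0 : MeasurableSpace Ω} (μ : Measure Ω) [IsProbabilityMeasure μ]
    (Yseq : ℕ → Ω → Y)
    (ℱ : Filtration ℕ m0)
    (hℱ : ∀ n, ℱ n = ⨆ i ∈ Icc 1 n, MeasurableSpace.comap (Yseq i) ⊤)
    (p : ℕ → Y → Ω → ℝ)
    (hp : ∀ n y, p n y =
      μ[(fun ω => if Yseq n ω = y then (1 : ℝ) else 0) | ℱ (n - 1)])
    (c : ℝ) (hc : 0 < c)
    (hbound : ∀ᵐ ω ∂μ, ∀ n, 1 ≤ n → c ≤ p n (Yseq n ω) ω) :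
    ∀ ε : ℝ, 0 < ε →
      Tendsto
        (fun N : ℕ =>
          μ {ω | ε <
            |(-(1 / (N : ℝ)) * ∑ n ∈ Icc 1 N, Real.logb 2 (p n (Yseq n ω) ω)) -
              (1 / (N : ℝ)) * ∑ n ∈ Icc 1 N, (-∑ y, p n y ω * Real.logb 2 (p n y ω))|})
        atTop (nhds 0) := by
  intro ε hε
  have hY (n : ℕ) (hn : 1 ≤ n) (y : Y) : MeasurableSet[ℱ n] {ω | Yseq n ω = y} := by
    rw [hℱ n]
    exact le_iSup₂ (f := fun i (_ : i ∈ Icc 1 n) ↦ MeasurableSpace.comap (Yseq i) ⊤) n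
      (by simp [hn]) _ ⟨{y}, trivial, rfl⟩
  have hpm (n : ℕ) (y : Y) : Measurable[ℱ n] (p n y) := by
    rw [hp]
    exact stronglyMeasurable_condExp.measurable.mono (ℱ.mono (Nat.sub_le n 1)) le_rfl
  have hcp (n : ℕ) (hn : 1 ≤ n) : ∀ᵐ ω ∂μ, c ≤ p n (Yseq n ω) ω :=
    hbound.mono fun ω h ↦ h n hn
  refine (tendsto_measure_lt_abs_average (ℱ := ℱ) (D := fun n ↦ excessSurprisal (Yseq n) (p n))
    (fun n hn ↦ stronglyMeasurable_excessSurprisal (hY n hn) (hpm n))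
    (fun n hn ↦ ae_abs_excessSurprisal_le (ae_mem_Icc_of_eq_condExp (hp n)) hc (hcp n hn))
    (fun n hn ↦ condExp_excessSurprisal_eq_zero (ℱ.le _) (fun y ↦ ℱ.le n _ (hY n hn y)) (hp n) hc
      (hcp n hn)) hε).congr fun N ↦ ?_
  congr with ω
  simp only [excessSurprisal, sum_sub_distrib, sum_neg_distrib, shannonEntropy]
  ring_nf

/-- **Un-Equipartition Property for Perplexity.** Let `Y` be a finite nonempty token
alphabet, `(Y_n)_{n ≥ 1}` a sequence of `Y`-valued random variables on a probability space,
and `F_n = σ(Y_1, …, Y_n)` the generated filtration (`F_0` trivial). Let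
`p_n(y) = P(Y_n = y | F_{n-1})` be the conditional next-token probabilities, and suppose
all realized token probabilities satisfy `p_n(Y_n) ≥ c > 0` almost surely. Then the
log-perplexity `l_N = −(1/N) ∑_{n=1}^N log₂ p_n(Y_n)` and the empirical entropy
`h_N = (1/N) ∑_{n=1}^N H(p_n)` satisfy `P(|l_N − h_N| > ε) → 0` for every `ε > 0`. -/
theorem unequipartition_property_perplexity
    {Y : Type*} [Fintype Y] [Nonempty Y]
    {Ω : Type*} {m0 : MeasurableSpace Ω} (μ : Measure Ω) [IsProbabilityMeasure μ]
    (Yseq : ℕ → Ω → Y)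
    (ℱ : Filtration ℕ m0)
    (hℱ : ∀ n, ℱ n = ⨆ i ∈ Icc 1 n, MeasurableSpace.comap (Yseq i) ⊤)
    (p : ℕ → Y → Ω → ℝ)
    (hp : ∀ n y, p n y =
      μ[(fun ω => if Yseq n ω = y then (1 : ℝ) else 0) | ℱ (n - 1)])
    (c : ℝ) (hc : 0 < c)
    (hbound : ∀ᵐ ω ∂μ, ∀ n, 1 ≤ n → c ≤ p n (Yseq n ω) ω) :
    ∀ ε : ℝ, 0 < ε →
      Tendsto
        (fun N : ℕ =>
          μ {ω | ε <
            |(-(1 / (N : ℝ)) * ∑ n ∈ Icc 1 N, Real.logb 2 (p n (Yseq n ω) ω)) -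
              (1 / (N : ℝ)) * ∑ n ∈ Icc 1 N, (-∑ y, p n y ω * Real.logb 2 (p n y ω))|})
        atTop (nhds 0) :=
  unequipartition_property_perplexity_general μ Yseq ℱ hℱ p hp c hc hbound
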